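/- Let 𝒳 be a 2-dimensional trajectory set with traded coordinates X_i = (X¹_i, X²_i), and let N : 𝒳 → ℕ be a bounded non-anticipative stopping rule. Define F(X) = X²_{N(X)}, and let σ̄¹_j denote the superhedging operator defined exactly like σ̄_j but using only portfolios that trade in the first asset, i.e. with payoffs V + Σ_{i=j}^{n−1} H_i(X̃)(X̃¹_{i+1} − X̃¹_i) for non-anticipative real-valued H_i. Fix a node (X,j) with j ≤ N(X) and assume that the (2-dimensional) property (L_{(X,j)}) holds. Then σ̄_j F(X) ≤ σ̄¹_j F(X), σ̲¹_j F(X) ≤ σ̲_j F(X), and consequently σ̲¹_j F(X) ≤ X²_j ≤ σ̄¹_j F(X). -/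
import Mathlib


open scoped InnerProductSpace ENNReal
open Finset

namespace Traj

variable {E : Type*} [NormedAddCommGroup E] [InnerProductSpace ℝ E]

/-- A trajectory set: a nonempty set of sequences sharing a common initial value. -/
def IsTrajectorySet (T : Set (ℕ → E)) (x0 : E) : Prop :=
  T.Nonempty ∧ ∀ X ∈ T, X 0 = x0

/-- The conditional trajectory set at the node `(X, k)`. -/
def condSet (T : Set (ℕ → E)) (X : ℕ → E) (k : ℕ) : Set (ℕ → E) :=
  {Y | Y ∈ T ∧ ∀ i ≤ k, Y i = X i}

/-- Non-anticipativity of a family `(G i)_{i ≥ j}` of functions on the conditional set. -/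
def NonAnticipative (T : Set (ℕ → E)) (X : ℕ → E) (j : ℕ)
    {F : Type*} (G : ℕ → (ℕ → E) → F) : Prop :=
  ∀ i, j ≤ i → ∀ Y ∈ condSet T X j, ∀ Z ∈ condSet T X j,
    (∀ k, j ≤ k → k ≤ i → Y k = Z k) → G i Y = G i Z

/-- The simple portfolio payoff `Π^{V,H}_{j,n}`. -/
noncomputable def piPort (H : ℕ → (ℕ → E) → E) (j n : ℕ) (V : ℝ) (Y : ℕ → E) : ℝ :=
  V + ∑ i ∈ Finset.Ico j n, ⟪H i Y, Y (i + 1) - Y i⟫_ℝ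

/-- The total initial cost `Σ_{m ≥ 0} V^m` of a generalized portfolio (`V^m ≥ 0` for `m ≥ 1`). -/
noncomputable def SuperhedgeCost (V : ℕ → ℝ) : EReal :=
  (V 0 : EReal) + ((∑' m : ℕ, ENNReal.ofReal (V (m + 1)) : ℝ≥0∞) : EReal)

/-- `(V, H, n)` is a generalized superhedge of `f` at node `(X, j)`: `f_0 = Π^{V⁰,H⁰}_{j,n₀}`
and, for `m ≥ 1`, `f_m = Π^{Vᵐ,Hᵐ}_{j,n_m}` with `Π^{Vᵐ,Hᵐ}_{j,n} ≥ 0` for all `n ≥ j`,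
and `f ≤ Σ_{m ≥ 0} f_m` on the conditional set. -/
def IsSuperhedge (T : Set (ℕ → E)) (X : ℕ → E) (j : ℕ) (f : (ℕ → E) → EReal)
    (V : ℕ → ℝ) (H : ℕ → ℕ → (ℕ → E) → E) (n : ℕ → ℕ) : Prop :=
  (∀ m, NonAnticipative T X j (H m)) ∧ (∀ m, j ≤ n m) ∧
  (∀ m, 1 ≤ m → ∀ k, j ≤ k → ∀ Y ∈ condSet T X j, 0 ≤ piPort (H m) j k (V m) Y) ∧
  (∀ Y ∈ condSet T X j,
    f Y ≤ (piPort (H 0) j (n 0) (V 0) Y : EReal)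
      + ((∑' m : ℕ, ENNReal.ofReal (piPort (H (m + 1)) j (n (m + 1)) (V (m + 1)) Y) :
          ℝ≥0∞) : EReal))

/-- The conditional superhedging operator `σ̄_j f (X)`. -/
noncomputable def sigmaUp (T : Set (ℕ → E)) (X : ℕ → E) (j : ℕ)
    (f : (ℕ → E) → EReal) : EReal :=
  sInf {c : EReal | ∃ V H n, IsSuperhedge T X j f V H n ∧ c = SuperhedgeCost V}

/-- The conditional underhedging operator `σ̲_j f = -σ̄_j (-f)`. -/
noncomputable def sigmaDown (T : Set (ℕ → E)) (X : ℕ → E) (j : ℕ)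
    (f : (ℕ → E) → EReal) : EReal :=
  - sigmaUp T X j (fun Y => - f Y)

/-- Hedge data for the conditional norm operator: all portfolios are nonnegative. -/
def IsNormHedge (T : Set (ℕ → E)) (X : ℕ → E) (j : ℕ) (f : (ℕ → E) → ℝ≥0∞)
    (V : ℕ → ℝ) (H : ℕ → ℕ → (ℕ → E) → E) (n : ℕ → ℕ) : Prop :=
  (∀ m, NonAnticipative T X j (H m)) ∧ (∀ m, j ≤ n m) ∧
  (∀ m, ∀ k, j ≤ k → ∀ Y ∈ condSet T X j, 0 ≤ piPort (H m) j k (V m) Y) ∧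
  (∀ Y ∈ condSet T X j,
    f Y ≤ ∑' m : ℕ, ENNReal.ofReal (piPort (H m) j (n m) (V m) Y))

/-- The conditional norm operator `Ī_j f (X)` (for nonnegative extended-real `f`). -/
noncomputable def Ibar (T : Set (ℕ → E)) (X : ℕ → E) (j : ℕ)
    (f : (ℕ → E) → ℝ≥0∞) : ℝ≥0∞ :=
  sInf {c : ℝ≥0∞ | ∃ V H n, IsNormHedge T X j f V H n ∧
    c = ∑' m : ℕ, ENNReal.ofReal (V m)}

/-- `A` is conditionally null at the node `(X, j)`. -/
def NullAt (T : Set (ℕ → E)) (X : ℕ → E) (j : ℕ) (A : Set (ℕ → E)) : Prop :=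
  Ibar T X j (A.indicator fun _ => (1 : ℝ≥0∞)) = 0

/-- `A` is a (global) null set. -/
def IsNull (T : Set (ℕ → E)) (A : Set (ℕ → E)) : Prop :=
  ∀ X ∈ T, NullAt T X 0 A

/-- Property `(L_{(X,j)})`. -/
def PropertyL (T : Set (ℕ → E)) (X : ℕ → E) (j : ℕ) : Prop :=
  ∀ V H n, IsSuperhedge T X j (fun _ => (0 : EReal)) V H n →
    (0 : EReal) ≤ SuperhedgeCost V

/-- `(X, k)` is an arbitrage-free node. -/
def ArbitrageFreeNode (T : Set (ℕ → E)) (X : ℕ → E) (k : ℕ) : Prop :=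
  ∀ h : E, (∀ Y ∈ condSet T X k, ⟪h, Y (k + 1) - Y k⟫_ℝ = 0) ∨
    (⨅ Y ∈ condSet T X k, ((⟪h, Y (k + 1) - Y k⟫_ℝ : ℝ) : EReal)) < 0

/-- The set `𝒩` of trajectories passing (non-constantly) through an arbitrage node. -/
def arbNull (T : Set (ℕ → E)) : Set (ℕ → E) :=
  {X | X ∈ T ∧ ∃ j : ℕ, ¬ ArbitrageFreeNode T X j ∧ X (j + 1) ≠ X j}

/-- Property `(L)`-a.e. -/
def LaeHolds (T : Set (ℕ → E)) : Prop :=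
  (∀ X ∈ T \ arbNull T, ∀ k, 1 ≤ k → PropertyL T X k) ∧
  (∀ X ∈ T, PropertyL T X 0)

/-- A bounded non-anticipative stopping rule. -/
def BoundedStoppingRule (T : Set (ℕ → E)) (N : (ℕ → E) → ℕ) : Prop :=
  (∃ nstar, ∀ X ∈ T, N X ≤ nstar) ∧
  (∀ k : ℕ, ∀ X ∈ T, ∀ Y ∈ T, (∀ i ≤ k, X i = Y i) → (N X ≤ k ↔ N Y ≤ k))

end Traj

namespace Traj

/-- Simple portfolio payoff trading only in the first asset of a 2-dimensional trajectory. -/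
noncomputable def piPort1 (H : ℕ → (ℕ → EuclideanSpace ℝ (Fin 2)) → ℝ) (j n : ℕ) (V : ℝ)
    (Y : ℕ → EuclideanSpace ℝ (Fin 2)) : ℝ :=
  V + ∑ i ∈ Finset.Ico j n, H i Y * (Y (i + 1) 0 - Y i 0)

/-- A generalized superhedge of `f` at node `(X,j)` using only portfolios trading in the first
asset. -/
def IsSuperhedge1 (T : Set (ℕ → EuclideanSpace ℝ (Fin 2)))
    (X : ℕ → EuclideanSpace ℝ (Fin 2)) (j : ℕ)
    (f : (ℕ → EuclideanSpace ℝ (Fin 2)) → EReal)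
    (V : ℕ → ℝ) (H : ℕ → ℕ → (ℕ → EuclideanSpace ℝ (Fin 2)) → ℝ) (n : ℕ → ℕ) : Prop :=
  (∀ m, NonAnticipative T X j (H m)) ∧ (∀ m, j ≤ n m) ∧
  (∀ m, 1 ≤ m → ∀ k, j ≤ k → ∀ Y ∈ condSet T X j, 0 ≤ piPort1 (H m) j k (V m) Y) ∧
  (∀ Y ∈ condSet T X j,
    f Y ≤ (piPort1 (H 0) j (n 0) (V 0) Y : EReal)
      + ((∑' m : ℕ, ENNReal.ofReal (piPort1 (H (m + 1)) j (n (m + 1)) (V (m + 1)) Y) :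
          ℝ≥0∞) : EReal))

/-- The superhedging operator `σ̄¹_j` that trades only in the first asset. -/
noncomputable def sigmaUp1 (T : Set (ℕ → EuclideanSpace ℝ (Fin 2)))
    (X : ℕ → EuclideanSpace ℝ (Fin 2)) (j : ℕ)
    (f : (ℕ → EuclideanSpace ℝ (Fin 2)) → EReal) : EReal :=
  sInf {c : EReal | ∃ V H n, IsSuperhedge1 T X j f V H n ∧ c = SuperhedgeCost V}

/-- The underhedging operator `σ̲¹_j f = -σ̄¹_j (-f)`. -/
noncomputable def sigmaDown1 (T : Set (ℕ → EuclideanSpace ℝ (Fin 2)))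
    (X : ℕ → EuclideanSpace ℝ (Fin 2)) (j : ℕ)
    (f : (ℕ → EuclideanSpace ℝ (Fin 2)) → EReal) : EReal :=
  - sigmaUp1 T X j (fun Y => - f Y)


section Aux

private lemma tele_aux (g : ℕ → ℝ) (j M : ℕ) (hM : j ≤ M) :
    ∑ i ∈ Finset.Ico j M, (g (i+1) - g i) = g M - g j := by
  induction M, hM using Nat.le_induction with
  | base => simp
  | succ M hM ih => rw [Finset.sum_Ico_succ_top hM, ih]; ring

private lemma teleStop_aux (g : ℕ → ℝ) (c : ℝ) (j M n : ℕ) (hjM : j ≤ M) (hMn : M ≤ n) :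
    ∑ i ∈ Finset.Ico j n, (if i < M then c else 0) * (g (i+1) - g i) = c * (g M - g j) := by
  rw [← Finset.sum_Ico_consecutive _ hjM hMn]
  have h1 : ∑ i ∈ Finset.Ico j M, (if i < M then c else 0) * (g (i+1) - g i)
      = c * ∑ i ∈ Finset.Ico j M, (g (i+1) - g i) := by
    rw [Finset.mul_sum]
    refine Finset.sum_congr rfl fun i hi => ?_
    rw [if_pos (Finset.mem_Ico.mp hi).2]
  have h2 : ∑ i ∈ Finset.Ico M n, (if i < M then c else 0) * (g (i+1) - g i) = 0 :=
    Finset.sum_eq_zero fun i hi => by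
      rw [if_neg (Nat.not_lt.mpr (Finset.mem_Ico.mp hi).1)]; ring
  rw [h1, h2, tele_aux g j M hjM]; ring

private lemma ereal_shift (a p : ℝ) (S : ℝ≥0∞)
    (h : (a : EReal) ≤ (p : EReal) + (S : EReal)) :
    (0 : EReal) ≤ ((p - a : ℝ) : EReal) + (S : EReal) := by
  rcases eq_or_ne S ⊤ with rfl | hS
  · rw [EReal.coe_ennreal_top, EReal.coe_add_top]; exact le_top
  · lift S to NNReal using hS with s
    rw [EReal.coe_nnreal_eq_coe_real, ← EReal.coe_add] at h ⊢
    have := EReal.coe_le_coe_iff.mp h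
    exact_mod_cast (by linarith : (0:ℝ) ≤ (p - a) + (s:ℝ))

private lemma ereal_unshift (a p : ℝ) (S : ℝ≥0∞)
    (h : (0 : EReal) ≤ ((p - a : ℝ) : EReal) + (S : EReal)) :
    (a : EReal) ≤ (p : EReal) + (S : EReal) := by
  rcases eq_or_ne S ⊤ with rfl | hS
  · rw [EReal.coe_ennreal_top, EReal.coe_add_top]; exact le_top
  · lift S to NNReal using hS with s
    rw [EReal.coe_nnreal_eq_coe_real, ← EReal.coe_add] at h ⊢
    have := EReal.coe_le_coe_iff.mp h
    exact_mod_cast (by linarith : a ≤ p + (s:ℝ))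

private lemma piPort_single_aux (H : ℕ → (ℕ → EuclideanSpace ℝ (Fin 2)) → ℝ) (j k : ℕ) (V : ℝ)
    (Y : ℕ → EuclideanSpace ℝ (Fin 2)) :
    piPort (fun i Z => EuclideanSpace.single (0 : Fin 2) (H i Z)) j k V Y
      = piPort1 H j k V Y := by
  unfold piPort piPort1
  congr 1
  refine Finset.sum_congr rfl fun i _ => ?_
  simp [EuclideanSpace.inner_single_left]

private lemma N_ge_aux {T : Set (ℕ → EuclideanSpace ℝ (Fin 2))}
    {N : (ℕ → EuclideanSpace ℝ (Fin 2)) → ℕ} (hN : BoundedStoppingRule T N)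
    {X : ℕ → EuclideanSpace ℝ (Fin 2)} (hX : X ∈ T) {j : ℕ} (hj : j ≤ N X)
    {Y : ℕ → EuclideanSpace ℝ (Fin 2)} (hY : Y ∈ condSet T X j) : j ≤ N Y := by
  rcases Nat.eq_zero_or_pos j with rfl | hj0
  · exact Nat.zero_le _
  by_contra h
  push_neg at h
  have hNY : N Y ≤ j - 1 := by omega
  have := (hN.2 (j - 1) Y hY.1 X hX (fun i hi => hY.2 i (by omega))).mp hNY
  omega

private lemma sigmaUp_le_sigmaUp1_aux (T : Set (ℕ → EuclideanSpace ℝ (Fin 2)))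
    (X : ℕ → EuclideanSpace ℝ (Fin 2)) (j : ℕ)
    (f : (ℕ → EuclideanSpace ℝ (Fin 2)) → EReal) :
    sigmaUp T X j f ≤ sigmaUp1 T X j f := by
  apply sInf_le_sInf
  rintro c ⟨V, H, n, ⟨h1, h2, h3, h4⟩, rfl⟩
  refine ⟨V, fun m i Z => EuclideanSpace.single (0 : Fin 2) (H m i Z), n, ⟨?_, h2, ?_, ?_⟩, rfl⟩
  · intro m i hi Y hY Z hZ hag
    show EuclideanSpace.single (0 : Fin 2) (H m i Y) = EuclideanSpace.single (0 : Fin 2) (H m i Z)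
    rw [h1 m i hi Y hY Z hZ hag]
  · intro m hm k hk Y hY
    show 0 ≤ piPort (fun i Z => EuclideanSpace.single (0 : Fin 2) (H m i Z)) j k (V m) Y
    rw [piPort_single_aux]; exact h3 m hm k hk Y hY
  · intro Y hY
    simpa only [piPort_single_aux] using h4 Y hY

private lemma key_aux (T : Set (ℕ → EuclideanSpace ℝ (Fin 2)))
    (N : (ℕ → EuclideanSpace ℝ (Fin 2)) → ℕ) (hN : BoundedStoppingRule T N)
    (X : ℕ → EuclideanSpace ℝ (Fin 2)) (hX : X ∈ T) (j : ℕ) (hj : j ≤ N X)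
    (hL : PropertyL T X j) (s : ℝ)
    (f : (ℕ → EuclideanSpace ℝ (Fin 2)) → EReal)
    (hf : ∀ Y, f Y = ((s * Y (N Y) 1 : ℝ) : EReal)) :
    ((s * X j 1 : ℝ) : EReal) ≤ sigmaUp1 T X j f := by
  apply le_sInf
  rintro c ⟨V, H, n, ⟨h1, h2, h3, h4⟩, rfl⟩
  obtain ⟨nstar, hnstar⟩ := hN.1
  set M : ℕ := max (n 0) nstar with hMdef
  have hnM : n 0 ≤ M := le_max_left _ _
  have hjM : j ≤ M := le_trans (h2 0) hnM
  -- the combined head portfolio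
  set G : ℕ → (ℕ → EuclideanSpace ℝ (Fin 2)) → EuclideanSpace ℝ (Fin 2) :=
    fun i Z => EuclideanSpace.single (0 : Fin 2) (if i < n 0 then H 0 i Z else 0)
      + EuclideanSpace.single (1 : Fin 2) (if i < N Z then -s else 0) with hGdef
  have hPi0 : ∀ Y ∈ condSet T X j,
      piPort G j M (V 0 - s * X j 1) Y = piPort1 (H 0) j (n 0) (V 0) Y - s * Y (N Y) 1 := by
    intro Y hY
    have hjN : j ≤ N Y := N_ge_aux hN hX hj hY
    have hNM : N Y ≤ M := le_trans (hnstar Y hY.1) (le_max_right _ _)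
    have hYj : Y j 1 = X j 1 := by rw [hY.2 j le_rfl]
    unfold piPort piPort1
    have hterm : ∀ i ∈ Finset.Ico j M,
        ⟪G i Y, Y (i+1) - Y i⟫_ℝ
          = (if i < n 0 then H 0 i Y else 0) * (Y (i+1) 0 - Y i 0)
            + (if i < N Y then -s else 0) * (Y (i+1) 1 - Y i 1) := by
      intro i _
      simp [hGdef, inner_add_left, EuclideanSpace.inner_single_left]
    rw [Finset.sum_congr rfl hterm, Finset.sum_add_distrib]
    have hA : ∑ i ∈ Finset.Ico j M, (if i < n 0 then H 0 i Y else 0) * (Y (i+1) 0 - Y i 0)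
        = ∑ i ∈ Finset.Ico j (n 0), H 0 i Y * (Y (i+1) 0 - Y i 0) := by
      rw [← Finset.sum_Ico_consecutive _ (h2 0) hnM]
      have ha : ∑ i ∈ Finset.Ico j (n 0),
          (if i < n 0 then H 0 i Y else 0) * (Y (i+1) 0 - Y i 0)
          = ∑ i ∈ Finset.Ico j (n 0), H 0 i Y * (Y (i+1) 0 - Y i 0) :=
        Finset.sum_congr rfl fun i hi => by rw [if_pos (Finset.mem_Ico.mp hi).2]
      have hb : ∑ i ∈ Finset.Ico (n 0) M,
          (if i < n 0 then H 0 i Y else 0) * (Y (i+1) 0 - Y i 0) = 0 :=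
        Finset.sum_eq_zero fun i hi => by
          rw [if_neg (Nat.not_lt.mpr (Finset.mem_Ico.mp hi).1)]; ring
      rw [ha, hb, add_zero]
    have hB : ∑ i ∈ Finset.Ico j M, (if i < N Y then -s else 0) * (Y (i+1) 1 - Y i 1)
        = -s * (Y (N Y) 1 - Y j 1) := teleStop_aux (fun k => Y k 1) (-s) j (N Y) M hjN hNM
    rw [hA, hB, hYj]; ring
  -- the zero superhedge
  have hzero : IsSuperhedge T X j (fun _ => (0 : EReal))
      (fun m => match m with | 0 => V 0 - s * X j 1 | (k+1) => V (k+1))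
      (fun m => match m with
        | 0 => G
        | (k+1) => fun i Z => EuclideanSpace.single (0 : Fin 2) (H (k+1) i Z))
      (fun m => match m with | 0 => M | (k+1) => n (k+1)) := by
    refine ⟨?_, ?_, ?_, ?_⟩
    · rintro (_ | m) i hi Y hY Z hZ hag
      · have hag' : ∀ k ≤ i, Y k = Z k := by
          intro k hk
          rcases le_or_gt j k with h | h
          · exact hag k h hk
          · rw [hY.2 k h.le, hZ.2 k h.le]
        have hiff := hN.2 i Y hY.1 Z hZ.1 hag'
        have hH := h1 0 i hi Y hY Z hZ hag
        have hNN : (i < N Y) ↔ (i < N Z) := by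
          constructor
          · intro h; by_contra hcon; push_neg at hcon
            exact absurd (hiff.mpr hcon) (by omega)
          · intro h; by_contra hcon; push_neg at hcon
            exact absurd (hiff.mp hcon) (by omega)
        show G i Y = G i Z
        rw [hGdef]
        dsimp only
        rw [hH]
        congr 1
        by_cases hc : i < N Y
        · rw [if_pos hc, if_pos (hNN.mp hc)]
        · rw [if_neg hc, if_neg (fun hcon => hc (hNN.mpr hcon))]
      · show EuclideanSpace.single (0 : Fin 2) (H (m+1) i Y)
            = EuclideanSpace.single (0 : Fin 2) (H (m+1) i Z)
        rw [h1 (m+1) i hi Y hY Z hZ hag]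
    · rintro (_ | m)
      · exact hjM
      · exact h2 (m+1)
    · rintro (_ | m) hm k hk Y hY
      · exact absurd hm (by omega)
      · show 0 ≤ piPort (fun i Z => EuclideanSpace.single (0 : Fin 2) (H (m+1) i Z))
            j k (V (m+1)) Y
        rw [piPort_single_aux]
        exact h3 (m+1) (Nat.succ_le_succ (Nat.zero_le m)) k hk Y hY
    · intro Y hY
      have h4Y := h4 Y hY
      rw [hf Y] at h4Y
      have hsh := ereal_shift (s * Y (N Y) 1) (piPort1 (H 0) j (n 0) (V 0) Y) _ h4Y
      show (0 : EReal) ≤ ((piPort G j M (V 0 - s * X j 1) Y : ℝ) : EReal)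
        + ((∑' m : ℕ, ENNReal.ofReal
            (piPort (fun i Z => EuclideanSpace.single (0 : Fin 2) (H (m+1) i Z))
              j (n (m+1)) (V (m+1)) Y) : ℝ≥0∞) : EReal)
      rw [hPi0 Y hY]
      have htsum : (∑' m : ℕ, ENNReal.ofReal
            (piPort (fun i Z => EuclideanSpace.single (0 : Fin 2) (H (m+1) i Z))
              j (n (m+1)) (V (m+1)) Y) : ℝ≥0∞)
          = ∑' m : ℕ, ENNReal.ofReal (piPort1 (H (m+1)) j (n (m+1)) (V (m+1)) Y) :=
        tsum_congr fun m => by rw [piPort_single_aux]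
      rw [htsum]
      exact hsh
  have hcost := hL _ _ _ hzero
  have hcost' : (0 : EReal) ≤ ((V 0 - s * X j 1 : ℝ) : EReal)
      + ((∑' m : ℕ, ENNReal.ofReal (V (m+1)) : ℝ≥0∞) : EReal) := hcost
  exact ereal_unshift (s * X j 1) (V 0) _ hcost'

end Aux

/-- one-asset hedging prices bracket the two-asset ones and the model price
`X²_j` lies between the one-asset underhedging and superhedging prices. -/
theorem oneAsset_hedging_bounds
    (T : Set (ℕ → EuclideanSpace ℝ (Fin 2))) (x0 : EuclideanSpace ℝ (Fin 2))
    (hT : IsTrajectorySet T x0)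
    (N : (ℕ → EuclideanSpace ℝ (Fin 2)) → ℕ) (hN : BoundedStoppingRule T N)
    (X : ℕ → EuclideanSpace ℝ (Fin 2)) (hX : X ∈ T) (j : ℕ) (hj : j ≤ N X)
    (hL : PropertyL T X j) :
    sigmaUp T X j (fun Y => ((Y (N Y) 1 : ℝ) : EReal))
      ≤ sigmaUp1 T X j (fun Y => ((Y (N Y) 1 : ℝ) : EReal)) ∧
    sigmaDown1 T X j (fun Y => ((Y (N Y) 1 : ℝ) : EReal))
      ≤ sigmaDown T X j (fun Y => ((Y (N Y) 1 : ℝ) : EReal)) ∧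
    sigmaDown1 T X j (fun Y => ((Y (N Y) 1 : ℝ) : EReal)) ≤ ((X j 1 : ℝ) : EReal) ∧
    ((X j 1 : ℝ) : EReal) ≤ sigmaUp1 T X j (fun Y => ((Y (N Y) 1 : ℝ) : EReal)) := by
  have hA := sigmaUp_le_sigmaUp1_aux T X j (fun Y => ((Y (N Y) 1 : ℝ) : EReal))
  have hB := sigmaUp_le_sigmaUp1_aux T X j (fun Y => -((Y (N Y) 1 : ℝ) : EReal))
  have hUp : ((X j 1 : ℝ) : EReal)
      ≤ sigmaUp1 T X j (fun Y => ((Y (N Y) 1 : ℝ) : EReal)) := by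
    have hk := key_aux T N hN X hX j hj hL 1 (fun Y => ((Y (N Y) 1 : ℝ) : EReal))
      (fun Y => by norm_num)
    simpa using hk
  have hDown : sigmaDown1 T X j (fun Y => ((Y (N Y) 1 : ℝ) : EReal)) ≤ ((X j 1 : ℝ) : EReal) := by
    have hk := key_aux T N hN X hX j hj hL (-1) (fun Y => -((Y (N Y) 1 : ℝ) : EReal))
      (fun Y => by
        rw [show (-1 * Y (N Y) 1 : ℝ) = -(Y (N Y) 1) by ring, EReal.coe_neg])
    rw [sigmaDown1]
    have : -(((X j 1 : ℝ) : EReal)) ≤ sigmaUp1 T X j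
        (fun Y => -((Y (N Y) 1 : ℝ) : EReal)) := by
      have he : ((-1 * X j 1 : ℝ) : EReal) = -(((X j 1 : ℝ) : EReal)) := by
        rw [show (-1 * X j 1 : ℝ) = -(X j 1) by ring, EReal.coe_neg]
      rw [← he]; exact hk
    calc -sigmaUp1 T X j (fun Y => -((Y (N Y) 1 : ℝ) : EReal))
        ≤ -(-(((X j 1 : ℝ) : EReal))) := EReal.neg_le_neg_iff.mpr this
      _ = ((X j 1 : ℝ) : EReal) := neg_neg _
  refine ⟨hA, ?_, hDown, hUp⟩
  rw [sigmaDown, sigmaDown1]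
  exact EReal.neg_le_neg_iff.mpr hB


end Traj
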